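/- Let h(1/2) = ε = 1/9 (so that h(1/2) = h_e(1/2) = h_o(1/2)). Then for every x in the open interval (1/4, 1/2), both h(1/2) − h_e(x) < ε·(1/2 − x) and h(1/2) − h_o(x) < ε·(1/2 − x) hold, where h_e and h_o are the digit-transfer maps from binary expansions of [0,1/2] into the Cantor set defined in the context. -/
import Mathlib


/-- The `i`-th binary digit (`i ≥ 1`) of `x ∈ [0, 1/2]`, using the terminating
binary expansion when `x ≤ 1/4` and the non-terminating one when `x > 1/4`. -/
noncomputable def binDigit (x : ℝ) (i : ℕ) : ℤ :=
  if x ≤ 1 / 4 then ⌊x * 2 ^ i⌋ - 2 * ⌊x * 2 ^ (i - 1)⌋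
  else ⌈x * 2 ^ i⌉ - 2 * ⌈x * 2 ^ (i - 1)⌉ + 1

open Classical in
/-- The ternary digits `γ_i` used in the even digit-transfer map `h_e`. -/
noncomputable def gammaE (x : ℝ) (i : ℕ) : ℝ :=
  if x ≤ 1 / 4 then
    (if ∃ j : ℕ, 2 ≤ j ∧ i = 2 * j ∧ binDigit x j = 1 then 2 else 0)
  else
    (if ∃ j : ℕ, 2 ≤ j ∧ i = 2 * j ∧ binDigit x j = 0 then 0 else 2)

open Classical in
/-- The ternary digits `γ_i` used in the odd digit-transfer map `h_o`. -/
noncomputable def gammaO (x : ℝ) (i : ℕ) : ℝ :=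
  if x ≤ 1 / 4 then
    (if ∃ j : ℕ, 2 ≤ j ∧ i = 2 * j + 1 ∧ binDigit x j = 1 then 2 else 0)
  else
    (if ∃ j : ℕ, 2 ≤ j ∧ i = 2 * j + 1 ∧ binDigit x j = 0 then 0 else 2)

/-- The even digit-transfer map `h_e(x) = ∑_{i≥1} γ_i 3^{-i-2}` into the Cantor set. -/
noncomputable def hE (x : ℝ) : ℝ := ∑' i : ℕ, gammaE x (i + 1) / 3 ^ (i + 3)

/-- The odd digit-transfer map `h_o(x) = ∑_{i≥1} γ_i 3^{-i-2}` into the Cantor set. -/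
noncomputable def hO (x : ℝ) : ℝ := ∑' i : ℕ, gammaO x (i + 1) / 3 ^ (i + 3)


open Filter Topology

namespace HEHOaux

/-- `dd x j = 1 - β_{j+1}`, the complement of the `(j+1)`-st nonterminating binary digit. -/
noncomputable def dd (x : ℝ) (j : ℕ) : ℤ := 2 * ⌈x * 2 ^ j⌉ - ⌈x * 2 ^ (j + 1)⌉

lemma dd_mem (x : ℝ) (j : ℕ) : dd x j = 0 ∨ dd x j = 1 := by
  have h2y : x * 2 ^ (j + 1) = (x * 2 ^ j) * 2 := by ring
  have h1 : ⌈(x * 2 ^ j) * 2⌉ ≤ 2 * ⌈x * 2 ^ j⌉ := by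
    apply Int.ceil_le.mpr
    push_cast
    nlinarith [Int.le_ceil (x * 2 ^ j)]
  have h2 : 2 * ⌈x * 2 ^ j⌉ - 2 < ⌈(x * 2 ^ j) * 2⌉ := by
    apply Int.lt_ceil.mpr
    push_cast
    nlinarith [Int.ceil_lt_add_one (x * 2 ^ j)]
  unfold dd
  rw [h2y]
  omega

lemma binDigit_eq (x : ℝ) (hx : ¬ x ≤ 1 / 4) (j : ℕ) :
    binDigit x (j + 1) = 1 - dd x j := by
  simp only [binDigit, if_neg hx, dd, Nat.add_sub_cancel]
  ring

lemma ceil_div_le (x : ℝ) (n : ℕ) : x ≤ (⌈x * 2 ^ n⌉ : ℝ) / 2 ^ n := by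
  rw [le_div_iff₀ (by positivity)]
  exact Int.le_ceil _

lemma ceil_div_lt (x : ℝ) (n : ℕ) : (⌈x * 2 ^ n⌉ : ℝ) / 2 ^ n < x + (1 / 2) ^ n := by
  rw [div_lt_iff₀ (by positivity)]
  have := Int.ceil_lt_add_one (x * 2 ^ n)
  have h : ((1:ℝ)/2)^n * 2^n = 1 := by
    rw [← mul_pow]; norm_num
  nlinarith

lemma tendsto_ceil_div (x : ℝ) :
    Tendsto (fun n : ℕ => (⌈x * 2 ^ n⌉ : ℝ) / 2 ^ n) atTop (𝓝 x) := by
  have hup : Tendsto (fun n : ℕ => x + (1/2:ℝ) ^ n) atTop (𝓝 x) := by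
    have := tendsto_pow_atTop_nhds_zero_of_lt_one (by norm_num : (0:ℝ) ≤ 1/2)
      (by norm_num : (1/2:ℝ) < 1)
    simpa using tendsto_const_nhds.add this
  exact tendsto_of_tendsto_of_tendsto_of_le_of_le tendsto_const_nhds hup
    (fun n => ceil_div_le x n) (fun n => (ceil_div_lt x n).le)

lemma hasSum_dd (x : ℝ) (hx1 : 1/4 < x) (hx2 : x < 1/2) :
    HasSum (fun k : ℕ => (dd x (k + 1) : ℝ) / 2 ^ (k + 2)) (1/2 - x) := by
  have hnn : ∀ k : ℕ, 0 ≤ (dd x (k + 1) : ℝ) / 2 ^ (k + 2) := by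
    intro k
    rcases dd_mem x (k+1) with h | h <;> rw [h] <;> positivity
  rw [hasSum_iff_tendsto_nat_of_nonneg hnn]
  have hpart : ∀ n : ℕ, ∑ k ∈ Finset.range n, (dd x (k + 1) : ℝ) / 2 ^ (k + 2)
      = 1/2 - (⌈x * 2 ^ (n+1)⌉ : ℝ) / 2 ^ (n+1) := by
    intro n
    have := Finset.sum_range_sub' (fun k : ℕ => (⌈x * 2 ^ (k+1)⌉ : ℝ) / 2 ^ (k+1)) n
    have hc1 : ⌈x * 2 ^ 1⌉ = 1 := by
      rw [Int.ceil_eq_iff]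
      constructor <;> push_cast <;> nlinarith
    calc ∑ k ∈ Finset.range n, (dd x (k + 1) : ℝ) / 2 ^ (k + 2)
        = ∑ k ∈ Finset.range n, ((⌈x * 2 ^ (k+1)⌉ : ℝ) / 2 ^ (k+1)
            - (⌈x * 2 ^ (k+2)⌉ : ℝ) / 2 ^ (k+2)) := by
          apply Finset.sum_congr rfl
          intro k _
          simp only [dd]
          push_cast
          ring
      _ = (⌈x * 2 ^ 1⌉ : ℝ) / 2 ^ 1 - (⌈x * 2 ^ (n+1)⌉ : ℝ) / 2 ^ (n+1) := by
          simpa using this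
      _ = 1/2 - (⌈x * 2 ^ (n+1)⌉ : ℝ) / 2 ^ (n+1) := by rw [hc1]; norm_num
  simp only [hpart]
  have := (tendsto_ceil_div x).comp (tendsto_add_atTop_nat 1)
  simpa using tendsto_const_nhds.sub this

end HEHOaux

namespace HEHOaux

lemma key_lt_E (k : ℕ) : (2:ℝ)/3^(2*k+6) < (1/9) * ((1:ℝ)/2^(k+2)) := by
  have h9 : (3:ℝ)^(2*k+6) = 9^k * 729 := by rw [pow_add, pow_mul]; norm_num
  have h2 : (2:ℝ)^(k+2) = 2^k * 4 := by rw [pow_add]; norm_num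
  have hk : (2:ℝ)^k ≤ 9^k := pow_le_pow_left₀ (by norm_num) (by norm_num) k
  have h9p : (0:ℝ) < 9^k := by positivity
  have h2p : (0:ℝ) < 2^k := by positivity
  have hrw : (1/9:ℝ) * (1/2^(k+2)) = 1/(9*2^(k+2)) := by
    rw [div_mul_div_comm]; norm_num
  rw [hrw, div_lt_div_iff₀ (by positivity) (by positivity), h9, h2]
  nlinarith

lemma key_lt_O (k : ℕ) : (2:ℝ)/3^(2*k+7) < (1/9) * ((1:ℝ)/2^(k+2)) := by
  have h9 : (3:ℝ)^(2*k+7) = 9^k * 2187 := by rw [pow_add, pow_mul]; norm_num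
  have h2 : (2:ℝ)^(k+2) = 2^k * 4 := by rw [pow_add]; norm_num
  have hk : (2:ℝ)^k ≤ 9^k := pow_le_pow_left₀ (by norm_num) (by norm_num) k
  have h9p : (0:ℝ) < 9^k := by positivity
  have h2p : (0:ℝ) < 2^k := by positivity
  have hrw : (1/9:ℝ) * (1/2^(k+2)) = 1/(9*2^(k+2)) := by
    rw [div_mul_div_comm]; norm_num
  rw [hrw, div_lt_div_iff₀ (by positivity) (by positivity), h9, h2]
  nlinarith

lemma hs19 : HasSum (fun i : ℕ => (2:ℝ)/3^(i+3)) (1/9) := by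
  have h := (hasSum_geometric_of_lt_one (by norm_num : (0:ℝ) ≤ 1/3)
    (by norm_num : (1/3:ℝ) < 1)).mul_left (2/27)
  have h19 : (2/27:ℝ) * ((1:ℝ) - 1/3)⁻¹ = 1/9 := by norm_num
  rw [h19] at h
  have hfun : (fun i : ℕ => (2:ℝ)/3^(i+3)) = fun i : ℕ => (2/27:ℝ) * (1/3)^i := by
    funext i
    rw [pow_add, div_pow]
    norm_num
    ring
  rw [hfun]
  exact h

end HEHOaux

open HEHOaux in
theorem hE_hO_contractive (x : ℝ) (hx : x ∈ Set.Ioo (1 / 4 : ℝ) (1 / 2)) :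
    (1 / 9 : ℝ) - hE x < (1 / 9) * (1 / 2 - x) ∧
    (1 / 9 : ℝ) - hO x < (1 / 9) * (1 / 2 - x) := by
  obtain ⟨hx1, hx2⟩ := hx
  have hxle : ¬ x ≤ 1/4 := not_le.mpr hx1
  -- right-hand side has-sum
  have hdds := hasSum_dd x hx1 hx2
  have hrhs : HasSum (fun k : ℕ => (1/9:ℝ) * ((dd x (k+1) : ℝ)/2^(k+2))) ((1/9)*(1/2 - x)) :=
    hdds.mul_left (1/9)
  have hddnn : ∀ k : ℕ, (0:ℝ) ≤ (dd x (k+1) : ℝ) := by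
    intro k
    rcases dd_mem x (k+1) with h | h <;> rw [h] <;> norm_num
  -- there is a digit equal to 0 beyond position 2
  have hex : ∃ k : ℕ, binDigit x (k+2) = 0 := by
    by_contra hno
    push_neg at hno
    have hdd0 : ∀ k : ℕ, dd x (k+1) = 0 := by
      intro k
      have hb : binDigit x (k+2) = 1 - dd x (k+1) := binDigit_eq x hxle (k+1)
      rcases dd_mem x (k+1) with h | h
      · exact h
      · exfalso; exact hno k (by omega)
    have h0 : HasSum (fun k : ℕ => (dd x (k+1):ℝ)/2^(k+2)) 0 := by
      have : (fun k : ℕ => (dd x (k+1):ℝ)/2^(k+2)) = fun _ => (0:ℝ) := by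
        funext k; rw [hdd0 k]; norm_num
      rw [this]; exact hasSum_zero
    have := hdds.unique h0
    linarith
  obtain ⟨k₀, hk₀⟩ := hex
  have hdd1 : ∀ k : ℕ, binDigit x (k+2) = 0 → dd x (k+1) = 1 := by
    intro k h
    have hb : binDigit x (k+2) = 1 - dd x (k+1) := binDigit_eq x hxle (k+1)
    omega
  constructor
  · -- hE part
    have hgnn : ∀ i : ℕ, 0 ≤ gammaE x i ∧ gammaE x i ≤ 2 := by
      intro i; unfold gammaE; split_ifs <;> norm_num
    have hsummE : Summable (fun i : ℕ => gammaE x (i+1)/3^(i+3)) := by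
      apply Summable.of_nonneg_of_le (fun i => by have := (hgnn (i+1)).1; positivity)
        (fun i => ?_) hs19.summable
      have := (hgnn (i+1)).2
      gcongr
    have hEhs : HasSum (fun i : ℕ => gammaE x (i+1)/3^(i+3)) (hE x) := hsummE.hasSum
    have hdiff : HasSum (fun i : ℕ => (2 - gammaE x (i+1))/3^(i+3)) (1/9 - hE x) := by
      have := hs19.sub hEhs
      simpa [sub_div] using this
    have hinj : Function.Injective (fun k : ℕ => 2*k+3) := by intro a b h; simp only at h; omega
    have hvanish : ∀ i ∉ Set.range (fun k : ℕ => 2*k+3),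
        (2 - gammaE x (i+1))/3^(i+3) = (0:ℝ) := by
      intro i hi
      have hg : gammaE x (i+1) = 2 := by
        unfold gammaE
        rw [if_neg hxle, if_neg]
        rintro ⟨j, hj2, hje, -⟩
        exact hi ⟨j-2, by show 2*(j-2)+3 = i; omega⟩
      rw [hg]; norm_num
    have hcomp := (hinj.hasSum_iff hvanish).mpr hdiff
    have hfE : HasSum (fun k : ℕ => if binDigit x (k+2) = 0 then (2:ℝ)/3^(2*k+6) else 0)
        (1/9 - hE x) := by
      have hfun : ((fun i : ℕ => (2 - gammaE x (i+1))/3^(i+3)) ∘ (fun k : ℕ => 2*k+3))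
          = fun k : ℕ => if binDigit x (k+2) = 0 then (2:ℝ)/3^(2*k+6) else 0 := by
        funext k
        simp only [Function.comp]
        have hiff : (∃ j : ℕ, 2 ≤ j ∧ 2*k+3+1 = 2*j ∧ binDigit x j = 0) ↔
            binDigit x (k+2) = 0 := by
          constructor
          · rintro ⟨j, hj2, hje, hb⟩
            have : j = k + 2 := by omega
            rwa [this] at hb
          · intro h; exact ⟨k+2, by omega, by omega, h⟩
        have harith : 2*k+3+3 = 2*k+6 := by omega
        simp only [gammaE, if_neg hxle, hiff, harith]
        by_cases hb : binDigit x (k+2) = 0 <;> simp [hb]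
      rwa [hfun] at hcomp
    have h0 : ∀ k : ℕ, (0:ℝ) ≤ if binDigit x (k+2) = 0 then (2:ℝ)/3^(2*k+6) else 0 := by
      intro k; split_ifs <;> positivity
    have hle : ∀ k : ℕ, (if binDigit x (k+2) = 0 then (2:ℝ)/3^(2*k+6) else 0)
        ≤ (1/9:ℝ) * ((dd x (k+1) : ℝ)/2^(k+2)) := by
      intro k
      by_cases h : binDigit x (k+2) = 0
      · rw [if_pos h, hdd1 k h]
        push_cast
        exact (key_lt_E k).le
      · rw [if_neg h]
        have := hddnn k
        positivity
    have hstrict : (if binDigit x (k₀+2) = 0 then (2:ℝ)/3^(2*k₀+6) else 0)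
        < (1/9:ℝ) * ((dd x (k₀+1) : ℝ)/2^(k₀+2)) := by
      rw [if_pos hk₀, hdd1 k₀ hk₀]
      push_cast
      exact key_lt_E k₀
    calc (1/9:ℝ) - hE x
        = ∑' k : ℕ, (if binDigit x (k+2) = 0 then (2:ℝ)/3^(2*k+6) else 0) := hfE.tsum_eq.symm
      _ < ∑' k : ℕ, (1/9:ℝ) * ((dd x (k+1) : ℝ)/2^(k+2)) :=
          Summable.tsum_lt_tsum_of_nonneg h0 hle hstrict hrhs.summable
      _ = (1/9) * (1/2 - x) := hrhs.tsum_eq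
  · -- hO part
    have hgnn : ∀ i : ℕ, 0 ≤ gammaO x i ∧ gammaO x i ≤ 2 := by
      intro i; unfold gammaO; split_ifs <;> norm_num
    have hsummO : Summable (fun i : ℕ => gammaO x (i+1)/3^(i+3)) := by
      apply Summable.of_nonneg_of_le (fun i => by have := (hgnn (i+1)).1; positivity)
        (fun i => ?_) hs19.summable
      have := (hgnn (i+1)).2
      gcongr
    have hOhs : HasSum (fun i : ℕ => gammaO x (i+1)/3^(i+3)) (hO x) := hsummO.hasSum
    have hdiff : HasSum (fun i : ℕ => (2 - gammaO x (i+1))/3^(i+3)) (1/9 - hO x) := by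
      have := hs19.sub hOhs
      simpa [sub_div] using this
    have hinj : Function.Injective (fun k : ℕ => 2*k+4) := by intro a b h; simp only at h; omega
    have hvanish : ∀ i ∉ Set.range (fun k : ℕ => 2*k+4),
        (2 - gammaO x (i+1))/3^(i+3) = (0:ℝ) := by
      intro i hi
      have hg : gammaO x (i+1) = 2 := by
        unfold gammaO
        rw [if_neg hxle, if_neg]
        rintro ⟨j, hj2, hje, -⟩
        exact hi ⟨j-2, by show 2*(j-2)+4 = i; omega⟩
      rw [hg]; norm_num
    have hcomp := (hinj.hasSum_iff hvanish).mpr hdiff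
    have hfO : HasSum (fun k : ℕ => if binDigit x (k+2) = 0 then (2:ℝ)/3^(2*k+7) else 0)
        (1/9 - hO x) := by
      have hfun : ((fun i : ℕ => (2 - gammaO x (i+1))/3^(i+3)) ∘ (fun k : ℕ => 2*k+4))
          = fun k : ℕ => if binDigit x (k+2) = 0 then (2:ℝ)/3^(2*k+7) else 0 := by
        funext k
        simp only [Function.comp]
        have hiff : (∃ j : ℕ, 2 ≤ j ∧ 2*k+4+1 = 2*j+1 ∧ binDigit x j = 0) ↔
            binDigit x (k+2) = 0 := by
          constructor
          · rintro ⟨j, hj2, hje, hb⟩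
            have : j = k + 2 := by omega
            rwa [this] at hb
          · intro h; exact ⟨k+2, by omega, by omega, h⟩
        have harith : 2*k+4+3 = 2*k+7 := by omega
        simp only [gammaO, if_neg hxle, hiff, harith]
        by_cases hb : binDigit x (k+2) = 0 <;> simp [hb]
      rwa [hfun] at hcomp
    have h0 : ∀ k : ℕ, (0:ℝ) ≤ if binDigit x (k+2) = 0 then (2:ℝ)/3^(2*k+7) else 0 := by
      intro k; split_ifs <;> positivity
    have hle : ∀ k : ℕ, (if binDigit x (k+2) = 0 then (2:ℝ)/3^(2*k+7) else 0)
        ≤ (1/9:ℝ) * ((dd x (k+1) : ℝ)/2^(k+2)) := by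
      intro k
      by_cases h : binDigit x (k+2) = 0
      · rw [if_pos h, hdd1 k h]
        push_cast
        exact (key_lt_O k).le
      · rw [if_neg h]
        have := hddnn k
        positivity
    have hstrict : (if binDigit x (k₀+2) = 0 then (2:ℝ)/3^(2*k₀+7) else 0)
        < (1/9:ℝ) * ((dd x (k₀+1) : ℝ)/2^(k₀+2)) := by
      rw [if_pos hk₀, hdd1 k₀ hk₀]
      push_cast
      exact key_lt_O k₀
    calc (1/9:ℝ) - hO x
        = ∑' k : ℕ, (if binDigit x (k+2) = 0 then (2:ℝ)/3^(2*k+7) else 0) := hfO.tsum_eq.symm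
      _ < ∑' k : ℕ, (1/9:ℝ) * ((dd x (k+1) : ℝ)/2^(k+2)) :=
          Summable.tsum_lt_tsum_of_nonneg h0 hle hstrict hrhs.summable
      _ = (1/9) * (1/2 - x) := hrhs.tsum_eq
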